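/- Assume there are random variables C₁ ∈ L^{p₁}, C₃ ∈ L^{p₃}, C₄ ∈ L^{p₄} with 1/p₁ + 1/p₃ + 1/p₄ ≤ 1, a real number β > 1, a full-measure set Ω′ ⊆ Ω, linear operators L̂_ω : 𝓑_ss → V_s with ‖L̂_ω h‖_s ≤ C₃(ω)·‖h‖_ss for ω ∈ Ω′ and h ∈ 𝓑_ss, and a family (h_ω)_{ω∈Ω} ⊆ 𝓑_ss, measurable in ω, with ψ(h_ω) = 1 and ‖h_ω‖_ss ≤ C₄(ω) for ω ∈ Ω′, such that ‖L^{n}_{ω} h‖_w ≤ C₁(ω)·n^{−β}·‖h‖_s for all n ≥ 1, ω ∈ Ω′ and h ∈ V_s. Then for ℙ-a.e. ω the series ĥ_ω := Σ_{n=0}^{∞} L^{n}_{σ^{−n}ω} L̂_{σ^{−(n+1)}ω} h_{σ^{−(n+1)}ω} converges absolutely in 𝓑_w, and ∫_Ω ‖ĥ_ω‖_w dℙ(ω) ≤ ‖C₃‖_{L^{p₃}}·‖C₄‖_{L^{p₄}}·( ‖C₁‖_{L^{p₁}}·Σ_{n≥1} n^{−β} + 1 ) < ∞. -/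
import Mathlib

open MeasureTheory

noncomputable section

/-- `C ∈ L^p(Ω,𝓕,ℙ)` for a nonnegative random variable `C`. -/
def MemLpRV {Ω : Type*} [MeasurableSpace Ω] (ℙ : Measure Ω) (p : ℝ) (C : Ω → ℝ) : Prop :=
  Measurable C ∧ (∀ ω, 0 ≤ C ω) ∧ Integrable (fun ω => C ω ^ p) ℙ

/-- The cocycle `L^n_ω = L_{σ^{n-1}ω} ∘ ⋯ ∘ L_ω` (with `L⁰ = Id`). -/
def iterOp {Ω E : Type*} [NormedAddCommGroup E] [NormedSpace ℝ E]
    (σ : Ω → Ω) (L : Ω → E →L[ℝ] E) : ℕ → Ω → E →L[ℝ] E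
  | 0, _ => ContinuousLinearMap.id ℝ E
  | n + 1, ω => (iterOp σ L n (σ ω)).comp (L ω)

/-- Hölder's inequality for three functions with exponents summing to at most one. -/
lemma hoelder3 {Ω : Type*} [MeasurableSpace Ω] (ℙ : Measure Ω) [IsProbabilityMeasure ℙ]
    {D1 D3 D4 : Ω → ENNReal} (m1 : Measurable D1) (m3 : Measurable D3) (m4 : Measurable D4)
    {p1 p3 p4 : ℝ} (hp1 : 0 < p1) (hp3 : 0 < p3) (hp4 : 0 < p4)
    (hsum : 1 / p1 + 1 / p3 + 1 / p4 ≤ 1) :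
    ∫⁻ ω, D1 ω * D3 ω * D4 ω ∂ℙ ≤
      (∫⁻ ω, D1 ω ^ p1 ∂ℙ) ^ (1/p1) * (∫⁻ ω, D3 ω ^ p3 ∂ℙ) ^ (1/p3) *
        (∫⁻ ω, D4 ω ^ p4 ∂ℙ) ^ (1/p4) := by
  have key := ENNReal.lintegral_prod_norm_pow_le (μ := ℙ) (Finset.univ : Finset (Fin 4))
    (f := ![fun ω => D1 ω ^ p1, fun ω => D3 ω ^ p3, fun ω => D4 ω ^ p4, fun _ => 1])
    (p := ![1/p1, 1/p3, 1/p4, 1 - (1/p1 + 1/p3 + 1/p4)])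
    (fun i _ => by
      fin_cases i
      · exact (m1.pow_const p1).aemeasurable
      · exact (m3.pow_const p3).aemeasurable
      · exact (m4.pow_const p4).aemeasurable
      · exact aemeasurable_const)
    (by simp [Fin.sum_univ_four])
    (fun i _ => by
      fin_cases i
      · show (0:ℝ) ≤ 1/p1; positivity
      · show (0:ℝ) ≤ 1/p3; positivity
      · show (0:ℝ) ≤ 1/p4; positivity
      · show (0:ℝ) ≤ 1 - (1/p1 + 1/p3 + 1/p4); linarith)
  have e1 : ∀ (p : ℝ), p ≠ 0 → ∀ (x : ENNReal), (x ^ p) ^ (1/p) = x := by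
    intro p hp x
    rw [← ENNReal.rpow_mul, mul_one_div_cancel hp, ENNReal.rpow_one]
  simp only [Fin.prod_univ_four, Matrix.cons_val_zero, Matrix.cons_val_one, Matrix.head_cons,
    Matrix.cons_val_two, Matrix.tail_cons, Matrix.cons_val_three, ENNReal.one_rpow,
    mul_one, lintegral_one, measure_univ] at key
  simp_rw [e1 p1 hp1.ne', e1 p3 hp3.ne', e1 p4 hp4.ne'] at key
  exact key

set_option maxHeartbeats 1000000 in
theorem stmt_16
    {Ω : Type*} [MeasurableSpace Ω] (ℙ : Measure Ω) [IsProbabilityMeasure ℙ]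
    (σ σinv : Ω → Ω)
    (hσ : MeasurePreserving σ ℙ ℙ) (hσinv : Measurable σinv)
    (hinv₁ : Function.LeftInverse σinv σ) (hinv₂ : Function.RightInverse σinv σ)
    {Bw Bs Bss : Type*}
    [NormedAddCommGroup Bw] [NormedSpace ℝ Bw] [CompleteSpace Bw]
    [NormedAddCommGroup Bs] [NormedSpace ℝ Bs]
    [NormedAddCommGroup Bss] [NormedSpace ℝ Bss]
    [MeasurableSpace Bss] [BorelSpace Bss]
    (ιs : Bs →L[ℝ] Bw) (ιss : Bss →L[ℝ] Bs)
    (hιs : ∀ x : Bs, ‖ιs x‖ ≤ ‖x‖) (hιss : ∀ x : Bss, ‖ιss x‖ ≤ ‖x‖)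
    (L : Ω → Bw →L[ℝ] Bw) (Ls : Ω → Bs →L[ℝ] Bs)
    (hcomp_s : ∀ ω x, ιs (Ls ω x) = L ω (ιs x))
    (ψ : Bw →L[ℝ] ℝ) (hψne : ψ ≠ 0)
    (hψinv : ∀ ω : Ω, ∀ x : Bw, ψ (L ω x) = ψ x)
    (p1 p3 p4 : ℝ) (hp1 : 0 < p1) (hp3 : 0 < p3) (hp4 : 0 < p4)
    (hsum : 1 / p1 + 1 / p3 + 1 / p4 ≤ 1)
    (C1 C3 C4 : Ω → ℝ)
    (hC1 : MemLpRV ℙ p1 C1) (hC3 : MemLpRV ℙ p3 C3) (hC4 : MemLpRV ℙ p4 C4)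
    (β : ℝ) (hβ : 1 < β)
    (Ω' : Set Ω) (hΩ' : ℙ Ω'ᶜ = 0)
    (Lhat : Ω → Bss →L[ℝ] Bs)
    (hVs : ∀ ω ∈ Ω', ∀ x : Bss, ψ (ιs (Lhat ω x)) = 0)
    (hLhat : ∀ ω ∈ Ω', ∀ x : Bss, ‖Lhat ω x‖ ≤ C3 ω * ‖x‖)
    (h : Ω → Bss) (hmeas : Measurable h)
    (hψh : ∀ ω ∈ Ω', ψ (ιs (ιss (h ω))) = 1)
    (hhss : ∀ ω ∈ Ω', ‖h ω‖ ≤ C4 ω)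
    (cond2 : ∀ n : ℕ, 1 ≤ n → ∀ ω ∈ Ω', ∀ x : Bs, ψ (ιs x) = 0 →
      ‖iterOp σ L n ω (ιs x)‖ ≤ C1 ω * (n : ℝ) ^ (-β) * ‖x‖) :
    (∀ᵐ ω ∂ℙ, Summable (fun n : ℕ =>
        ‖iterOp σ L n (σinv^[n] ω) (ιs (Lhat (σinv^[n + 1] ω) (h (σinv^[n + 1] ω))))‖)) ∧
      ∫⁻ ω, ENNReal.ofReal
          ‖∑' n : ℕ, iterOp σ L n (σinv^[n] ω)
              (ιs (Lhat (σinv^[n + 1] ω) (h (σinv^[n + 1] ω))))‖ ∂ℙ ≤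
        ENNReal.ofReal
          ((∫ ω, C3 ω ^ p3 ∂ℙ) ^ (1 / p3) * (∫ ω, C4 ω ^ p4 ∂ℙ) ^ (1 / p4) *
            ((∫ ω, C1 ω ^ p1 ∂ℙ) ^ (1 / p1) * (∑' n : ℕ, ((n : ℝ) + 1) ^ (-β)) + 1)) := by
  classical
  obtain ⟨mC1, nC1, iC1⟩ := hC1
  obtain ⟨mC3, nC3, iC3⟩ := hC3
  obtain ⟨mC4, nC4, iC4⟩ := hC4
  -- the inverse is measure preserving
  have hσinvMP : MeasurePreserving σinv ℙ ℙ :=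
    MeasurePreserving.symm (⟨⟨σ, σinv, hinv₁, hinv₂⟩, hσ.measurable, hσinv⟩ : Ω ≃ᵐ Ω) hσ
  -- abbreviations
  set I1 := ∫ ω, C1 ω ^ p1 ∂ℙ with hI1def
  set I3 := ∫ ω, C3 ω ^ p3 ∂ℙ with hI3def
  set I4 := ∫ ω, C4 ω ^ p4 ∂ℙ with hI4def
  have hI1nn : 0 ≤ I1 := integral_nonneg fun ω => Real.rpow_nonneg (nC1 ω) p1
  have hI3nn : 0 ≤ I3 := integral_nonneg fun ω => Real.rpow_nonneg (nC3 ω) p3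
  have hI4nn : 0 ≤ I4 := integral_nonneg fun ω => Real.rpow_nonneg (nC4 ω) p4
  set K1 := I1 ^ (1/p1) with hK1def
  set K3 := I3 ^ (1/p3) with hK3def
  set K4 := I4 ^ (1/p4) with hK4def
  have hK1nn : 0 ≤ K1 := Real.rpow_nonneg hI1nn _
  have hK3nn : 0 ≤ K3 := Real.rpow_nonneg hI3nn _
  have hK4nn : 0 ≤ K4 := Real.rpow_nonneg hI4nn _
  -- the series ∑ (n+1)^(-β)
  have hS : Summable (fun n : ℕ => ((n:ℝ) + 1) ^ (-β)) := by
    have h1 : Summable (fun n : ℕ => ((n:ℝ)) ^ (-β)) := Real.summable_nat_rpow.mpr (by linarith)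
    have h2 := (summable_nat_add_iff 1).mpr h1
    refine h2.congr fun n => ?_
    push_cast
    ring_nf
  set S := ∑' n : ℕ, ((n:ℝ) + 1) ^ (-β) with hSdef
  have hSnn : 0 ≤ S := tsum_nonneg fun n => Real.rpow_nonneg (by positivity) _
  -- the dominating sequence
  set G : ℕ → Ω → ℝ := fun n ω =>
    (if n = 0 then 1 else C1 (σinv^[n] ω) * (n:ℝ) ^ (-β)) *
      (C3 (σinv^[n+1] ω) * C4 (σinv^[n+1] ω)) with hGdef
  have hGnn : ∀ n ω, 0 ≤ G n ω := by
    intro n ω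
    apply mul_nonneg
    · split
      · exact zero_le_one
      · exact mul_nonneg (nC1 _) (Real.rpow_nonneg (Nat.cast_nonneg n) _)
    · exact mul_nonneg (nC3 _) (nC4 _)
  have hGmeas : ∀ n, Measurable fun ω => ENNReal.ofReal (G n ω) := by
    intro n
    apply Measurable.ennreal_ofReal
    apply Measurable.mul
    · by_cases hn : n = 0
      · simp only [hn, if_pos rfl]; exact measurable_const
      · simp only [if_neg hn]
        exact (mC1.comp (hσinv.iterate n)).mul measurable_const
    · exact (mC3.comp (hσinv.iterate (n+1))).mul (mC4.comp (hσinv.iterate (n+1)))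
  -- pointwise domination on the good set
  have hptw : ∀ ω, (∀ k : ℕ, σinv^[k] ω ∈ Ω') → ∀ n : ℕ,
      ‖iterOp σ L n (σinv^[n] ω) (ιs (Lhat (σinv^[n + 1] ω) (h (σinv^[n + 1] ω))))‖ ≤ G n ω := by
    intro ω hω n
    have hx : ‖Lhat (σinv^[n+1] ω) (h (σinv^[n+1] ω))‖ ≤ C3 (σinv^[n+1] ω) * C4 (σinv^[n+1] ω) :=
      le_trans (hLhat _ (hω (n+1)) _)
        (mul_le_mul_of_nonneg_left (hhss _ (hω (n+1))) (nC3 _))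
    match n with
    | 0 =>
      have hg : G 0 ω = C3 (σinv^[0+1] ω) * C4 (σinv^[0+1] ω) := by simp [hGdef]
      rw [hg]
      simpa [iterOp] using le_trans (hιs _) hx
    | (m+1) =>
      have h0 : ψ (ιs (Lhat (σinv^[m+1+1] ω) (h (σinv^[m+1+1] ω)))) = 0 :=
        hVs _ (hω (m+1+1)) _
      have hb := cond2 (m+1) (Nat.le_add_left 1 m) (σinv^[m+1] ω) (hω (m+1)) _ h0
      refine le_trans hb ?_
      simp only [hGdef, if_neg (Nat.succ_ne_zero m)]
      exact mul_le_mul_of_nonneg_left hx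
        (mul_nonneg (nC1 _) (Real.rpow_nonneg (Nat.cast_nonneg _) _))
  -- the good set has full measure
  have hae : ∀ᵐ ω ∂ℙ, ∀ k : ℕ, σinv^[k] ω ∈ Ω' := by
    rw [ae_all_iff]
    intro k
    have hk : ℙ ((σinv^[k]) ⁻¹' Ω'ᶜ) = 0 :=
      (hσinvMP.iterate k).quasiMeasurePreserving.preimage_null hΩ'
    exact ae_iff.2 hk
  -- lintegral identities
  have hLI1 : ∫⁻ ω, (ENNReal.ofReal (C1 ω)) ^ p1 ∂ℙ = ENNReal.ofReal I1 := by
    rw [hI1def, ofReal_integral_eq_lintegral_ofReal iC1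
      (Filter.Eventually.of_forall fun ω => Real.rpow_nonneg (nC1 ω) p1)]
    exact lintegral_congr fun ω => ENNReal.ofReal_rpow_of_nonneg (nC1 ω) hp1.le
  have hLI3 : ∫⁻ ω, (ENNReal.ofReal (C3 ω)) ^ p3 ∂ℙ = ENNReal.ofReal I3 := by
    rw [hI3def, ofReal_integral_eq_lintegral_ofReal iC3
      (Filter.Eventually.of_forall fun ω => Real.rpow_nonneg (nC3 ω) p3)]
    exact lintegral_congr fun ω => ENNReal.ofReal_rpow_of_nonneg (nC3 ω) hp3.le
  have hLI4 : ∫⁻ ω, (ENNReal.ofReal (C4 ω)) ^ p4 ∂ℙ = ENNReal.ofReal I4 := by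
    rw [hI4def, ofReal_integral_eq_lintegral_ofReal iC4
      (Filter.Eventually.of_forall fun ω => Real.rpow_nonneg (nC4 ω) p4)]
    exact lintegral_congr fun ω => ENNReal.ofReal_rpow_of_nonneg (nC4 ω) hp4.le
  -- Hölder with a shift for C1
  have hH : ∫⁻ ω, ENNReal.ofReal (C1 (σ ω)) * ENNReal.ofReal (C3 ω) * ENNReal.ofReal (C4 ω) ∂ℙ
      ≤ ENNReal.ofReal (K1 * K3 * K4) := by
    have hho := hoelder3 ℙ (D1 := fun ω => ENNReal.ofReal (C1 (σ ω)))
      (D3 := fun ω => ENNReal.ofReal (C3 ω)) (D4 := fun ω => ENNReal.ofReal (C4 ω))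
      ((mC1.comp hσ.measurable).ennreal_ofReal) mC3.ennreal_ofReal mC4.ennreal_ofReal
      hp1 hp3 hp4 hsum
    have hshift : ∫⁻ ω, (ENNReal.ofReal (C1 (σ ω))) ^ p1 ∂ℙ
        = ∫⁻ ω, (ENNReal.ofReal (C1 ω)) ^ p1 ∂ℙ :=
      hσ.lintegral_comp (mC1.ennreal_ofReal.pow_const p1)
    rw [hshift, hLI1, hLI3, hLI4] at hho
    refine hho.trans (le_of_eq ?_)
    rw [ENNReal.ofReal_rpow_of_nonneg hI1nn (by positivity),
      ENNReal.ofReal_rpow_of_nonneg hI3nn (by positivity),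
      ENNReal.ofReal_rpow_of_nonneg hI4nn (by positivity),
      ← ENNReal.ofReal_mul hK1nn, ← ENNReal.ofReal_mul (by positivity)]
  -- Hölder for C3·C4 only
  have hH0 : ∫⁻ ω, ENNReal.ofReal (C3 ω) * ENNReal.ofReal (C4 ω) ∂ℙ
      ≤ ENNReal.ofReal (K3 * K4) := by
    have hho := hoelder3 ℙ (D1 := fun _ => (1 : ENNReal))
      (D3 := fun ω => ENNReal.ofReal (C3 ω)) (D4 := fun ω => ENNReal.ofReal (C4 ω))
      measurable_const mC3.ennreal_ofReal mC4.ennreal_ofReal hp1 hp3 hp4 hsum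
    simp only [one_mul, ENNReal.one_rpow, lintegral_one, measure_univ] at hho
    rw [hLI3, hLI4] at hho
    refine hho.trans (le_of_eq ?_)
    rw [ENNReal.ofReal_rpow_of_nonneg hI3nn (by positivity),
      ENNReal.ofReal_rpow_of_nonneg hI4nn (by positivity),
      ← ENNReal.ofReal_mul hK3nn]
  -- bound for each term of the series
  have key0 : ∫⁻ ω, ENNReal.ofReal (G 0 ω) ∂ℙ ≤ ENNReal.ofReal (K3 * K4) := by
    have hcv : ∫⁻ ω, (fun ω' => ENNReal.ofReal (C3 ω') * ENNReal.ofReal (C4 ω')) (σinv^[0+1] ω) ∂ℙ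
        = ∫⁻ ω, ENNReal.ofReal (C3 ω) * ENNReal.ofReal (C4 ω) ∂ℙ :=
      (hσinvMP.iterate (0+1)).lintegral_comp (mC3.ennreal_ofReal.mul mC4.ennreal_ofReal)
    calc ∫⁻ ω, ENNReal.ofReal (G 0 ω) ∂ℙ
        = ∫⁻ ω, ENNReal.ofReal (C3 (σinv^[0+1] ω)) * ENNReal.ofReal (C4 (σinv^[0+1] ω)) ∂ℙ := by
          refine lintegral_congr fun ω => ?_
          have hg : G 0 ω = C3 (σinv^[0+1] ω) * C4 (σinv^[0+1] ω) := by simp [hGdef]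
          rw [hg]
          exact ENNReal.ofReal_mul (nC3 _)
      _ = ∫⁻ ω, ENNReal.ofReal (C3 ω) * ENNReal.ofReal (C4 ω) ∂ℙ := by exact hcv
      _ ≤ ENNReal.ofReal (K3 * K4) := hH0
  have keyS : ∀ m : ℕ, ∫⁻ ω, ENNReal.ofReal (G (m+1) ω) ∂ℙ
      ≤ ENNReal.ofReal (((m:ℝ)+1) ^ (-β)) * ENNReal.ofReal (K1 * K3 * K4) := by
    intro m
    have hid1 : ∀ ω, σinv^[m+1] (σ^[m+1+1] ω) = σ ω := by
      intro ω
      rw [Function.iterate_succ_apply]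
      exact hinv₁.iterate (m+1) (σ ω)
    have hid2 : ∀ ω, σinv^[m+1+1] (σ^[m+1+1] ω) = ω := fun ω => hinv₁.iterate (m+1+1) ω
    have hmeasg : Measurable fun ω' => ENNReal.ofReal (C1 (σinv^[m+1] ω')) *
        ENNReal.ofReal (C3 (σinv^[m+1+1] ω')) * ENNReal.ofReal (C4 (σinv^[m+1+1] ω')) :=
      (((mC1.comp (hσinv.iterate (m+1))).ennreal_ofReal.mul
        (mC3.comp (hσinv.iterate (m+1+1))).ennreal_ofReal).mul
        (mC4.comp (hσinv.iterate (m+1+1))).ennreal_ofReal)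
    have hcv : ∫⁻ ω, ENNReal.ofReal (C1 (σinv^[m+1] ω)) *
        ENNReal.ofReal (C3 (σinv^[m+1+1] ω)) * ENNReal.ofReal (C4 (σinv^[m+1+1] ω)) ∂ℙ
        = ∫⁻ ω, ENNReal.ofReal (C1 (σ ω)) * ENNReal.ofReal (C3 ω) * ENNReal.ofReal (C4 ω) ∂ℙ := by
      rw [← (hσ.iterate (m+1+1)).lintegral_comp hmeasg]
      refine lintegral_congr fun ω => ?_
      simp only [hid1 ω, hid2 ω]
    have hsplit : ∀ ω, ENNReal.ofReal (G (m+1) ω)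
        = ENNReal.ofReal (((m:ℝ)+1) ^ (-β)) * (ENNReal.ofReal (C1 (σinv^[m+1] ω)) *
            ENNReal.ofReal (C3 (σinv^[m+1+1] ω)) * ENNReal.ofReal (C4 (σinv^[m+1+1] ω))) := by
      intro ω
      simp only [hGdef, if_neg (Nat.succ_ne_zero m)]
      rw [ENNReal.ofReal_mul (mul_nonneg (nC1 _) (Real.rpow_nonneg (Nat.cast_nonneg _) _)),
        ENNReal.ofReal_mul (nC1 _), ENNReal.ofReal_mul (nC3 _)]
      push_cast
      ring
    calc ∫⁻ ω, ENNReal.ofReal (G (m+1) ω) ∂ℙ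
        = ENNReal.ofReal (((m:ℝ)+1) ^ (-β)) * ∫⁻ ω, ENNReal.ofReal (C1 (σinv^[m+1] ω)) *
            ENNReal.ofReal (C3 (σinv^[m+1+1] ω)) * ENNReal.ofReal (C4 (σinv^[m+1+1] ω)) ∂ℙ := by
          simp_rw [hsplit]
          exact lintegral_const_mul _ hmeasg
      _ = ENNReal.ofReal (((m:ℝ)+1) ^ (-β)) *
            ∫⁻ ω, ENNReal.ofReal (C1 (σ ω)) * ENNReal.ofReal (C3 ω) * ENNReal.ofReal (C4 ω) ∂ℙ := by
          rw [hcv]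
      _ ≤ ENNReal.ofReal (((m:ℝ)+1) ^ (-β)) * ENNReal.ofReal (K1 * K3 * K4) :=
          mul_le_mul_right hH _
  -- total bound
  set B : ENNReal := ENNReal.ofReal (K3*K4) + ENNReal.ofReal S * ENNReal.ofReal (K1*K3*K4)
    with hBdef
  have hBfin : B ≠ ⊤ := by
    simp only [hBdef]
    exact ENNReal.add_ne_top.2 ⟨ENNReal.ofReal_ne_top,
      ENNReal.mul_ne_top ENNReal.ofReal_ne_top ENNReal.ofReal_ne_top⟩
  have hB : B ≤ ENNReal.ofReal (K3 * K4 * (K1 * S + 1)) := by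
    rw [hBdef, ← ENNReal.ofReal_mul hSnn, ← ENNReal.ofReal_add (by positivity) (by positivity)]
    exact ENNReal.ofReal_le_ofReal (le_of_eq (by ring))
  have hsumInt : ∑' n : ℕ, ∫⁻ ω, ENNReal.ofReal (G n ω) ∂ℙ ≤ B := by
    rw [tsum_eq_zero_add' ENNReal.summable, hBdef]
    refine add_le_add key0 ?_
    calc ∑' m : ℕ, ∫⁻ ω, ENNReal.ofReal (G (m+1) ω) ∂ℙ
        ≤ ∑' m : ℕ, ENNReal.ofReal (((m:ℝ)+1) ^ (-β)) * ENNReal.ofReal (K1*K3*K4) :=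
          ENNReal.tsum_le_tsum fun m => keyS m
      _ = (∑' m : ℕ, ENNReal.ofReal (((m:ℝ)+1) ^ (-β))) * ENNReal.ofReal (K1*K3*K4) :=
          ENNReal.tsum_mul_right
      _ = ENNReal.ofReal S * ENNReal.ofReal (K1*K3*K4) := by
          rw [hSdef, ENNReal.ofReal_tsum_of_nonneg (fun n => Real.rpow_nonneg (by positivity) _) hS]
  -- the ENNReal-valued dominating function
  set T : Ω → ENNReal := fun ω => ∑' n : ℕ, ENNReal.ofReal (G n ω) with hTdef
  have hTmeas : Measurable T := Measurable.ennreal_tsum hGmeas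
  have hTint : ∫⁻ ω, T ω ∂ℙ ≤ B := by
    rw [hTdef]
    rw [lintegral_tsum (fun n => (hGmeas n).aemeasurable)]
    exact hsumInt
  have hTfin : ∀ᵐ ω ∂ℙ, T ω < ⊤ := ae_lt_top hTmeas (ne_top_of_le_ne_top hBfin hTint)
  -- a.e. summability and domination
  have hgood : ∀ᵐ ω ∂ℙ, Summable (fun n : ℕ =>
        ‖iterOp σ L n (σinv^[n] ω) (ιs (Lhat (σinv^[n + 1] ω) (h (σinv^[n + 1] ω))))‖) ∧
      ENNReal.ofReal ‖∑' n : ℕ, iterOp σ L n (σinv^[n] ω)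
          (ιs (Lhat (σinv^[n + 1] ω) (h (σinv^[n + 1] ω))))‖ ≤ T ω := by
    filter_upwards [hae, hTfin] with ω hω hfin
    have hGsum : Summable (fun n => G n ω) := by
      have h1 := ENNReal.summable_toReal hfin.ne
      refine h1.congr fun n => ?_
      exact ENNReal.toReal_ofReal (hGnn n ω)
    have hvsum : Summable (fun n : ℕ =>
        ‖iterOp σ L n (σinv^[n] ω) (ιs (Lhat (σinv^[n + 1] ω) (h (σinv^[n + 1] ω))))‖) :=
      Summable.of_nonneg_of_le (fun n => norm_nonneg _) (fun n => hptw ω hω n) hGsum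
    refine ⟨hvsum, ?_⟩
    have h1 : ‖∑' n : ℕ, iterOp σ L n (σinv^[n] ω)
          (ιs (Lhat (σinv^[n + 1] ω) (h (σinv^[n + 1] ω))))‖
        ≤ ∑' n : ℕ, ‖iterOp σ L n (σinv^[n] ω)
          (ιs (Lhat (σinv^[n + 1] ω) (h (σinv^[n + 1] ω))))‖ :=
      norm_tsum_le_tsum_norm hvsum
    have h2 : ∑' n : ℕ, ‖iterOp σ L n (σinv^[n] ω)
          (ιs (Lhat (σinv^[n + 1] ω) (h (σinv^[n + 1] ω))))‖ ≤ ∑' n, G n ω :=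
      Summable.tsum_le_tsum (fun n => hptw ω hω n) hvsum hGsum
    calc ENNReal.ofReal ‖∑' n : ℕ, iterOp σ L n (σinv^[n] ω)
          (ιs (Lhat (σinv^[n + 1] ω) (h (σinv^[n + 1] ω))))‖
        ≤ ENNReal.ofReal (∑' n, G n ω) := ENNReal.ofReal_le_ofReal (h1.trans h2)
      _ = T ω := by
          rw [hTdef, ENNReal.ofReal_tsum_of_nonneg (fun n => hGnn n ω) hGsum]
  refine ⟨hgood.mono fun ω hg => hg.1, ?_⟩
  calc ∫⁻ ω, ENNReal.ofReal ‖∑' n : ℕ, iterOp σ L n (σinv^[n] ω)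
          (ιs (Lhat (σinv^[n + 1] ω) (h (σinv^[n + 1] ω))))‖ ∂ℙ
      ≤ ∫⁻ ω, T ω ∂ℙ := lintegral_mono_ae (hgood.mono fun ω hg => hg.2)
    _ ≤ B := hTint
    _ ≤ ENNReal.ofReal (K3 * K4 * (K1 * S + 1)) := hB
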